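/- Under the hypotheses r_1⌈n_1/(r_1+δ_1−1)⌉ ≤ k−1 and r_1⌈(Δ−1)/(δ_1−1)⌉ + (Δ−1) < n_1, where Δ = ⌈n_1/(r_1+δ_1−1)⌉(δ_1−1), the quantity ρ = max{x : Φ(x)−x < k} satisfies ρ ≥ Δ for any [n,k,d] code with two (r_i,δ_i)_{i∈{1,2}} localities. -/

import Mathlib

open scoped Classical

/-- `R` is a regenerating set of coordinate `i` for the code with generator matrix `G`:
`i ∈ R` and the `i`-th column of `G` is a linear combination of the columns indexed by `R \ {i}`. -/
def regenSet {𝔽 : Type*} [Field 𝔽] {m n : ℕ} (G : Matrix (Fin m) (Fin n) 𝔽)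
    (i : Fin n) (R : Finset (Fin n)) : Prop :=
  i ∈ R ∧ (fun t => G t i) ∈ Submodule.span 𝔽 ((fun j => fun t => G t j) '' ↑(R.erase i))

/-- A sequence of regenerating sets `R j` of coordinates `l j` with a nontrivial union. -/
def ntUnion {𝔽 : Type*} [Field 𝔽] {m n : ℕ} (G : Matrix (Fin m) (Fin n) 𝔽) (x : ℕ)
    (l : Fin x → Fin n) (R : Fin x → Finset (Fin n)) : Prop :=
  (∀ j, regenSet G (l j) (R j)) ∧ ∀ j j' : Fin x, j' < j → l j ∉ R j'

/-- `Φ(x)`: minimum size of the union of `x` regenerating sets having a nontrivial union. -/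
noncomputable def Phi {𝔽 : Type*} [Field 𝔽] {m n : ℕ} (G : Matrix (Fin m) (Fin n) 𝔽)
    (x : ℕ) : ℕ :=
  sInf {c | ∃ (l : Fin x → Fin n) (R : Fin x → Finset (Fin n)),
    ntUnion G x l R ∧ (Finset.univ.biUnion R).card = c}

/-- `ρ = max { x : Φ(x) − x < k }` (over those `x` where `Φ` is defined). -/
noncomputable def rho {𝔽 : Type*} [Field 𝔽] {m n : ℕ} (G : Matrix (Fin m) (Fin n) 𝔽)
    (k : ℕ) : ℕ :=
  sSup {x | (∃ (l : Fin x → Fin n) (R : Fin x → Finset (Fin n)), ntUnion G x l R) ∧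
    Phi G x - x < k}

/-- The linear code generated by the rows of `G`. -/
def rowCode {𝔽 : Type*} [Field 𝔽] {m n : ℕ} (G : Matrix (Fin m) (Fin n) 𝔽) :
    Submodule 𝔽 (Fin n → 𝔽) :=
  Submodule.span 𝔽 (Set.range fun t => G t)

/-- Hamming weight of a vector. -/
noncomputable def wt {𝔽 : Type*} [Field 𝔽] {n : ℕ} (c : Fin n → 𝔽) : ℕ :=
  (Finset.univ.filter fun j => c j ≠ 0).card

/-- Minimum (Hamming) distance of a linear code. -/
noncomputable def minDist {𝔽 : Type*} [Field 𝔽] {n : ℕ} (C : Submodule 𝔽 (Fin n → 𝔽)) : ℕ :=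
  sInf {w | ∃ c ∈ C, c ≠ 0 ∧ wt c = w}

/-- Membership in the dual code `C⊥`. -/
def inDual {𝔽 : Type*} [Field 𝔽] {n : ℕ} (C : Submodule 𝔽 (Fin n → 𝔽))
    (e : Fin n → 𝔽) : Prop :=
  ∀ c ∈ C, ∑ j, e j * c j = 0

/-- Ceiling of natural division: `cdiv a b = ⌈a / b⌉`. -/
def cdiv (a b : ℕ) : ℕ := (a + b - 1) / b

/-- All coordinates in `T` have `(r, δ)`-locality (Definition 3.1/3.2). -/
def hasLocality {𝔽 : Type*} [Field 𝔽] {m n : ℕ} (G : Matrix (Fin m) (Fin n) 𝔽)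
    (T : Finset (Fin n)) (r δ : ℕ) : Prop :=
  ∀ ι ∈ T, ∃ S ⊆ T, ι ∈ S ∧ δ ≤ S.card ∧ S.card ≤ r + δ - 1 ∧
    ∀ E ⊆ S, E.card = δ - 1 → ∀ j ∈ E, regenSet G j ((S \ E) ∪ {j})

/-! Greedily cover `T₁` by local groups `S`: inside each `S`, a set `E` of `δ₁ - 1` coordinates
containing as many still uncovered ones as possible yields regenerating sets `(S \ E) ∪ {j}`,
`j ∈ E` uncovered, which continue a nontrivial union. This gives a nontrivial union inside `T₁` of
length at least `(δ₁ - 1) n₁ / (r₁ + δ₁ - 1)`, which is `≥ Δ` because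
`r₁ ⌈(Δ - 1) / (δ₁ - 1)⌉ + (Δ - 1) < n₁`; hence
`Φ(Δ) - Δ ≤ n₁ - Δ ≤ r₁ ⌈n₁ / (r₁ + δ₁ - 1)⌉ < k`. -/

theorem le_mul_cdiv {a b : ℕ} (hb : 0 < b) : a ≤ b * cdiv a b :=
  le_smul_ceilDiv hb

theorem mul_le_mul_min {f q s : ℕ} (hq : q ≤ s) (hf : f ≤ s) : q * f ≤ s * min f q := by
  rcases le_total f q with h | h
  · rw [min_eq_left h]; exact Nat.mul_le_mul_right f hq
  · rw [min_eq_right h, mul_comm s]; exact Nat.mul_le_mul_left q hf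

theorem le_of_mul_le_of_cdiv_lt {r q n L D : ℕ} (hq : 0 < q) (hL : q * n ≤ (r + q) * L)
    (hD : r * cdiv (D - 1) q + (D - 1) < n) : D ≤ L := by
  have hc := le_mul_cdiv (a := D - 1) hq
  by_contra! hLD
  -- `q * n ≥ r * (D - 1) + q * D > (r + q) * (D - 1)`
  have : (r + q) * L ≤ (r + q) * (D - 1) := Nat.mul_le_mul_left _ (by omega)
  nlinarith

section Chains

variable {𝔽 : Type*} [Field 𝔽] {m n : ℕ} (G : Matrix (Fin m) (Fin n) 𝔽)

/-- List form of `ntUnion`, convenient for concatenation. -/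
def IsRegenChain (c : List (Fin n × Finset (Fin n))) : Prop :=
  (∀ p ∈ c, regenSet G p.1 p.2) ∧ c.Pairwise fun p p' => p'.1 ∉ p.2

variable {G}

theorem IsRegenChain.append {c₁ c₂ : List (Fin n × Finset (Fin n))} (h₁ : IsRegenChain G c₁)
    (h₂ : IsRegenChain G c₂) (h : ∀ p ∈ c₁, ∀ p' ∈ c₂, p'.1 ∉ p.2) :
    IsRegenChain G (c₁ ++ c₂) := by
  refine ⟨fun p hp => ?_, List.pairwise_append.mpr ⟨h₁.2, h₂.2, h⟩⟩
  rcases List.mem_append.mp hp with hp | hp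
  exacts [h₁.1 p hp, h₂.1 p hp]

theorem IsRegenChain.exists_ntUnion {c : List (Fin n × Finset (Fin n))} {x : ℕ}
    {T : Finset (Fin n)} (hc : IsRegenChain G c) (hx : x ≤ c.length) (hT : ∀ p ∈ c, p.2 ⊆ T) :
    ∃ l R, ntUnion G x l R ∧ Finset.univ.biUnion R ⊆ T := by
  let get (j : Fin x) := c.get (j.castLE hx)
  refine ⟨fun j => (get j).1, fun j => (get j).2, ⟨fun j => hc.1 _ (List.get_mem _ _),
    fun j j' hjj' => List.pairwise_iff_get.mp hc.2 _ _ hjj'⟩, ?_⟩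
  exact Finset.biUnion_subset.mpr fun j _ => hT _ (List.get_mem _ _)

theorem ntUnion.injective {x : ℕ} {l : Fin x → Fin n} {R : Fin x → Finset (Fin n)}
    (h : ntUnion G x l R) : Function.Injective l := by
  intro j j' hjj'
  by_contra hne
  rcases lt_or_gt_of_ne hne with hlt | hlt
  · exact h.2 j' j hlt (hjj' ▸ (h.1 j).1)
  · exact h.2 j j' hlt (hjj' ▸ (h.1 j').1)

theorem Phi_le_card {x : ℕ} {l : Fin x → Fin n} {R : Fin x → Finset (Fin n)}
    {T : Finset (Fin n)} (h : ntUnion G x l R) (hRT : Finset.univ.biUnion R ⊆ T) :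
    Phi G x ≤ T.card :=
  calc Phi G x ≤ (Finset.univ.biUnion R).card := Nat.sInf_le ⟨l, R, h, rfl⟩
    _ ≤ T.card := Finset.card_le_card hRT

theorem le_rho {x k : ℕ} {l : Fin x → Fin n} {R : Fin x → Finset (Fin n)}
    (h : ntUnion G x l R) (hk : Phi G x - x < k) : x ≤ rho G k :=
  le_csSup ⟨n, fun _ ⟨⟨l', _, h'⟩, _⟩ => by simpa using Fintype.card_le_of_injective l' h'.injective⟩
    ⟨⟨l, R, h⟩, hk⟩

namespace hasLocality

variable {T : Finset (Fin n)} {r δ : ℕ}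

theorem pos (hloc : hasLocality G T r δ) (hT : T.Nonempty) : 0 < r := by
  obtain ⟨ι, hι⟩ := hT
  obtain ⟨S, -, hιS, hδS, hSr, -⟩ := hloc ι hι
  have := Finset.card_pos.mpr ⟨ι, hιS⟩
  omega

theorem exists_regenBlock (hloc : hasLocality G T r δ) {ι : Fin n} (hι : ι ∈ T)
    (U : Finset (Fin n)) :
    ∃ S ⊆ T, ι ∈ S ∧ ∃ c, IsRegenChain G c ∧ (∀ p ∈ c, p.2 ⊆ S ∧ p.1 ∈ S \ U) ∧
      (δ - 1) * (S \ U).card ≤ (r + (δ - 1)) * c.length := by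
  obtain ⟨S, hST, hιS, hδS, hSr, hSE⟩ := hloc ι hι
  obtain ⟨F, hFSU, hFcard⟩ := Finset.exists_subset_card_eq (min_le_left (S \ U).card (δ - 1))
  obtain ⟨E, hFE, hES, hEcard⟩ := Finset.exists_subsuperset_card_eq
    (hFSU.trans Finset.sdiff_subset) (hFcard.trans_le (min_le_right _ _)) (by omega)
  refine ⟨S, hST, hιS, F.toList.map fun j => (j, S \ E ∪ {j}), ⟨?_, ?_⟩, ?_, ?_⟩
  · simp only [List.mem_map, Finset.mem_toList]
    rintro _ ⟨j, hj, rfl⟩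
    exact hSE E hES hEcard j (hFE hj)
  · rw [List.pairwise_map]
    refine F.nodup_toList.imp_of_mem fun {j j'} _ hj' hne => ?_
    have : j' ∈ E := hFE (Finset.mem_toList.mp hj')
    simp_all [eq_comm]
  · simp only [List.mem_map, Finset.mem_toList]
    rintro _ ⟨j, hj, rfl⟩
    have hj := hFSU hj
    exact ⟨Finset.union_subset Finset.sdiff_subset (Finset.singleton_subset_iff.mpr
      (Finset.mem_sdiff.mp hj).1), hj⟩
  · rw [List.length_map, Finset.length_toList, hFcard]
    exact mul_le_mul_min (Nat.le_add_left _ _)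
      ((Finset.card_le_card Finset.sdiff_subset).trans (hSr.trans (by omega)))

theorem exists_regenChain (hloc : hasLocality G T r δ) (U : Finset (Fin n)) :
    ∃ c, IsRegenChain G c ∧ (∀ p ∈ c, p.2 ⊆ T ∧ p.1 ∉ U) ∧
      (δ - 1) * (T \ U).card ≤ (r + (δ - 1)) * c.length := by
  rcases (T \ U).eq_empty_or_nonempty with hTU | ⟨ι, hι⟩
  · exact ⟨[], ⟨by simp, by simp⟩, by simp, by simp [hTU]⟩
  obtain ⟨hιT, hιU⟩ := Finset.mem_sdiff.mp hι
  obtain ⟨S, hST, hιS, b, hb, hbS, hblen⟩ := hloc.exists_regenBlock hιT U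
  have : (T \ (U ∪ S)).card < (T \ U).card :=
    Finset.card_lt_card ⟨Finset.sdiff_subset_sdiff le_rfl Finset.subset_union_left,
      fun h => (Finset.mem_sdiff.mp (h hι)).2 (Finset.mem_union_right U hιS)⟩
  obtain ⟨c, hc, hcT, hclen⟩ := hloc.exists_regenChain (U ∪ S)
  refine ⟨b ++ c, hb.append hc fun p hp p' hp' hp'p =>
    (hcT p' hp').2 (Finset.mem_union_right U ((hbS p hp).1 hp'p)), ?_, ?_⟩
  · intro p hp
    rcases List.mem_append.mp hp with hp | hp
    · exact ⟨(hbS p hp).1.trans hST, (Finset.mem_sdiff.mp (hbS p hp).2).2⟩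
    · exact ⟨(hcT p hp).1, fun h => (hcT p hp).2 (Finset.mem_union_left S h)⟩
  · have hsplit : T \ U ⊆ S \ U ∪ T \ (U ∪ S) := by
      intro x; simp only [Finset.mem_sdiff, Finset.mem_union]; tauto
    calc (δ - 1) * (T \ U).card
        ≤ (δ - 1) * ((S \ U).card + (T \ (U ∪ S)).card) :=
          Nat.mul_le_mul_left _ ((Finset.card_le_card hsplit).trans (Finset.card_union_le _ _))
      _ ≤ (r + (δ - 1)) * (b ++ c).length := by
          rw [List.length_append, Nat.mul_add, Nat.mul_add]; exact Nat.add_le_add hblen hclen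
termination_by (T \ U).card

end hasLocality

end Chains

theorem rho_ge_Delta_general {𝔽 : Type*} [Field 𝔽] {m n : ℕ}
    (G : Matrix (Fin m) (Fin n) 𝔽) (k : ℕ)
    (T₁ : Finset (Fin n)) (n₁ r₁ δ₁ : ℕ)
    (hn₁ : T₁.card = n₁)
    (hloc₁ : hasLocality G T₁ r₁ δ₁)
    (Δ : ℕ) (hΔ : Δ = cdiv n₁ (r₁ + δ₁ - 1) * (δ₁ - 1))
    (h1 : r₁ * cdiv n₁ (r₁ + δ₁ - 1) ≤ k - 1)
    (h2 : r₁ * cdiv (Δ - 1) (δ₁ - 1) + (Δ - 1) < n₁) :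
    Δ ≤ rho G k := by
  rcases Nat.eq_zero_or_pos Δ with rfl | hΔpos
  · exact Nat.zero_le _
  set a := cdiv n₁ (r₁ + δ₁ - 1)
  have ha : 0 < a := Nat.pos_of_mul_pos_right (hΔ ▸ hΔpos)
  have hδ₁ : 0 < δ₁ - 1 := Nat.pos_of_mul_pos_left (hΔ ▸ hΔpos)
  have hr₁ : 0 < r₁ := hloc₁.pos (Finset.card_pos.mp (by omega))
  obtain ⟨c, hc, hcT, hclen⟩ := hloc₁.exists_regenChain ∅
  rw [Finset.sdiff_empty, hn₁] at hclen
  obtain ⟨l, R, hnt, hRT⟩ :=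
    hc.exists_ntUnion (le_of_mul_le_of_cdiv_lt hδ₁ hclen h2) fun p hp => (hcT p hp).1
  refine le_rho hnt ?_
  have hPhi := hn₁ ▸ Phi_le_card hnt hRT
  have hn₁a : n₁ ≤ (r₁ + δ₁ - 1) * a := le_mul_cdiv (by omega)
  have hsplit : (r₁ + δ₁ - 1) * a = r₁ * a + Δ := by
    rw [hΔ, show r₁ + δ₁ - 1 = r₁ + (δ₁ - 1) by omega, add_mul, mul_comm (δ₁ - 1)]
  have := Nat.mul_pos hr₁ ha
  omega

/-- under the hypotheses of Lemma 3.1, `ρ ≥ Δ`. -/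
theorem rho_ge_Delta {𝔽 : Type*} [Field 𝔽] {m n : ℕ}
    (G : Matrix (Fin m) (Fin n) 𝔽) (k : ℕ)
    (hk : k = Module.finrank 𝔽 (rowCode G))
    (T₁ T₂ : Finset (Fin n)) (n₁ n₂ r₁ r₂ δ₁ δ₂ : ℕ)
    (hdisj : Disjoint T₁ T₂) (hcover : T₁ ∪ T₂ = Finset.univ)
    (hn₁ : T₁.card = n₁) (hn₂ : T₂.card = n₂)
    (hr : r₁ ≤ r₂) (hδ : δ₂ ≤ δ₁) (hδ₂ : 2 ≤ δ₂)
    (hloc₁ : hasLocality G T₁ r₁ δ₁) (hloc₂ : hasLocality G T₂ r₂ δ₂)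
    (Δ : ℕ) (hΔ : Δ = cdiv n₁ (r₁ + δ₁ - 1) * (δ₁ - 1))
    (h1 : r₁ * cdiv n₁ (r₁ + δ₁ - 1) ≤ k - 1)
    (h2 : r₁ * cdiv (Δ - 1) (δ₁ - 1) + (Δ - 1) < n₁) :
    Δ ≤ rho G k :=
  rho_ge_Delta_general G k T₁ n₁ r₁ δ₁ hn₁ hloc₁ Δ hΔ h1 h2
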